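/- For any second-level sequent Ψ ⇛ Φ, the following six conditions are equivalent: (1) there is a finite set Σ of formulas such that for every GL-model ⟨W,R,V⟩ and every Σ-reflexive world w ∈ W, the sequent Ψ ⇛ Φ is true at w; (2) for every GL-model ⟨W,R,V⟩ there is a finite set Σ of formulas such that the sequent Ψ ⇛ Φ is true at every Σ-reflexive world w ∈ W; (3) for every GL-model ⟨W,R,V⟩ and every infinitely descending sequence w₁ R⁻¹ w₂ R⁻¹ w₃ ⋯ in W, there is a number i such that for every j ≥ i the sequent Ψ ⇛ Φ is true at w_j; (4) for every GL-model ⟨W,R,V⟩ and every infinitely descending sequence w₁ R⁻¹ w₂ R⁻¹ w₃ ⋯ in W, there is a number i such that the sequent Ψ ⇛ Φ is true at w_i; (5) Ψ ⇛ Φ is cut-free provable in GLS_seq; (6) Ψ ⇛ Φ is provable in GLS_seq. -/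

import Mathlib

/-- Modal formulas: propositional variables, ⊥, →, □. -/
inductive Formula : Type
  | var : ℕ → Formula
  | bot : Formula
  | imp : Formula → Formula → Formula
  | box : Formula → Formula
deriving DecidableEq

/-- Levels of sequents in GLS_seq: first level (⇒) and second level (⇛). -/
inductive SeqLevel : Type
  | one
  | two
deriving DecidableEq

/-- The set of subformulas of a formula. -/
def Formula.subf : Formula → Finset Formula
  | .var p => {.var p}
  | .bot => {.bot}
  | .imp φ ψ => insert (.imp φ ψ) (φ.subf ∪ ψ.subf)
  | .box φ => insert (.box φ) φ.subf

/-- SF(Ψ,Φ): all subformulas of formulas in Ψ ∪ Φ. -/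
def SF (Ψ Φ : Finset Formula) : Finset Formula := (Ψ ∪ Φ).biUnion Formula.subf

def Formula.isBox : Formula → Bool
  | .box _ => true
  | _ => false

def Formula.unbox : Formula → Formula
  | .box φ => φ
  | φ => φ

/-- Θ_□ = {φ : □φ ∈ Θ}. -/
def boxInv (Θ : Finset Formula) : Finset Formula :=
  (Θ.filter fun ψ => ψ.isBox).image Formula.unbox

/-- The sequent calculus GLS_seq, on sequents of two levels.  The Bool parameter
records whether the cut rule may be used: `GLSSeq true` is provability in GLS_seq,
`GLSSeq false` is cut-free provability.  The first-level fragment is exactly GL_seq. -/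
inductive GLSSeq : Bool → SeqLevel → Finset Formula → Finset Formula → Prop
  | init (c lv φ) : GLSSeq c lv {φ} {φ}
  | initBot (c lv) : GLSSeq c lv {Formula.bot} ∅
  | cut {lv Γ Δ} (φ) : GLSSeq true lv Γ (insert φ Δ) → GLSSeq true lv (insert φ Γ) Δ →
      GLSSeq true lv Γ Δ
  | weak {c lv Γ Δ Γ' Δ'} : Γ ⊆ Γ' → Δ ⊆ Δ' → GLSSeq c lv Γ Δ → GLSSeq c lv Γ' Δ'
  | impL {c lv Γ Δ φ ψ} : GLSSeq c lv Γ (insert φ Δ) → GLSSeq c lv (insert ψ Γ) Δ →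
      GLSSeq c lv (insert (.imp φ ψ) Γ) Δ
  | impR {c lv Γ Δ φ ψ} : GLSSeq c lv (insert φ Γ) (insert ψ Δ) →
      GLSSeq c lv Γ (insert (.imp φ ψ) Δ)
  | boxGL {c Γ φ} : GLSSeq c .one (Γ ∪ Γ.image .box ∪ {.box φ}) {φ} →
      GLSSeq c .one (Γ.image .box) {.box φ}
  | boxL {c Γ Δ} (φ) : GLSSeq c .two (insert φ Γ) Δ → GLSSeq c .two (insert (.box φ) Γ) Δ
  | lift {c Γ Δ} : GLSSeq c .one Γ Δ → GLSSeq c .two Γ Δ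

/-- The sequent calculus GL_seq (on first-level sequents only). -/
inductive GLSeq : Bool → Finset Formula → Finset Formula → Prop
  | init (c φ) : GLSeq c {φ} {φ}
  | initBot (c) : GLSeq c {Formula.bot} ∅
  | cut {Γ Δ} (φ) : GLSeq true Γ (insert φ Δ) → GLSeq true (insert φ Γ) Δ → GLSeq true Γ Δ
  | weak {c Γ Δ Γ' Δ'} : Γ ⊆ Γ' → Δ ⊆ Δ' → GLSeq c Γ Δ → GLSeq c Γ' Δ'
  | impL {c Γ Δ φ ψ} : GLSeq c Γ (insert φ Δ) → GLSeq c (insert ψ Γ) Δ →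
      GLSeq c (insert (.imp φ ψ) Γ) Δ
  | impR {c Γ Δ φ ψ} : GLSeq c (insert φ Γ) (insert ψ Δ) → GLSeq c Γ (insert (.imp φ ψ) Δ)
  | boxGL {c Γ φ} : GLSeq c (Γ ∪ Γ.image .box ∪ {.box φ}) {φ} → GLSeq c (Γ.image .box) {.box φ}

/-- Proof trees of GLS_seq (cut included). -/
inductive GLSTree : SeqLevel → Finset Formula → Finset Formula → Type
  | init (lv φ) : GLSTree lv {φ} {φ}
  | initBot (lv) : GLSTree lv {Formula.bot} ∅
  | cut {lv Γ Δ} (φ) : GLSTree lv Γ (insert φ Δ) → GLSTree lv (insert φ Γ) Δ → GLSTree lv Γ Δ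
  | weak {lv Γ Δ} (Γ' Δ' : Finset Formula) : Γ ⊆ Γ' → Δ ⊆ Δ' → GLSTree lv Γ Δ → GLSTree lv Γ' Δ'
  | impL {lv Γ Δ} (φ ψ) : GLSTree lv Γ (insert φ Δ) → GLSTree lv (insert ψ Γ) Δ →
      GLSTree lv (insert (.imp φ ψ) Γ) Δ
  | impR {lv Γ Δ} (φ ψ) : GLSTree lv (insert φ Γ) (insert ψ Δ) → GLSTree lv Γ (insert (.imp φ ψ) Δ)
  | boxGL (Γ φ) : GLSTree .one (Γ ∪ Γ.image .box ∪ {.box φ}) {φ} → GLSTree .one (Γ.image .box) {.box φ}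
  | boxL {Γ Δ} (φ) : GLSTree .two (insert φ Γ) Δ → GLSTree .two (insert (.box φ) Γ) Δ
  | lift {Γ Δ} : GLSTree .one Γ Δ → GLSTree .two Γ Δ

/-- The set of principal formulas of all (□L) rules occurring in a proof tree. -/
def GLSTree.principals : ∀ {lv Γ Δ}, GLSTree lv Γ Δ → Finset Formula
  | _, _, _, .init _ _ => ∅
  | _, _, _, .initBot _ => ∅
  | _, _, _, .cut _ t₁ t₂ => t₁.principals ∪ t₂.principals
  | _, _, _, .weak _ _ _ _ t => t.principals
  | _, _, _, .impL _ _ t₁ t₂ => t₁.principals ∪ t₂.principals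
  | _, _, _, .impR _ _ t => t.principals
  | _, _, _, .boxGL _ _ t => t.principals
  | _, _, _, .boxL φ t => insert (Formula.box φ) t.principals
  | _, _, _, .lift t => t.principals

/-- A proof tree bundled with its level and conclusion. -/
abbrev PGLSTree : Type :=
  (lv : SeqLevel) × (Γ : Finset Formula) × (Δ : Finset Formula) × GLSTree lv Γ Δ

/-- The set of subproofs of a proof tree (including the tree itself). -/
def GLSTree.subproofs {lv Γ Δ} (t : GLSTree lv Γ Δ) : Set PGLSTree :=
  insert ⟨lv, Γ, Δ, t⟩ <|
    match lv, Γ, Δ, t with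
    | _, _, _, .init _ _ => ∅
    | _, _, _, .initBot _ => ∅
    | _, _, _, .cut _ t₁ t₂ => t₁.subproofs ∪ t₂.subproofs
    | _, _, _, .weak _ _ _ _ t₁ => t₁.subproofs
    | _, _, _, .impL _ _ t₁ t₂ => t₁.subproofs ∪ t₂.subproofs
    | _, _, _, .impR _ _ t₁ => t₁.subproofs
    | _, _, _, .boxGL _ _ t₁ => t₁.subproofs
    | _, _, _, .boxL _ t₁ => t₁.subproofs
    | _, _, _, .lift t₁ => t₁.subproofs

/-- Kripke satisfaction over a frame `R` with atomic valuation `v`. -/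
def KSat {W : Type} (R : W → W → Prop) (v : W → ℕ → Prop) : Formula → W → Prop
  | .var p, w => v w p
  | .bot, _ => False
  | .imp φ ψ, w => KSat R v φ w → KSat R v ψ w
  | .box φ, w => ∀ w', R w w' → KSat R v φ w'

/-- A GL-model: a nonempty, transitive, converse well-founded Kripke model. -/
structure GLModel where
  World : Type
  ne : Nonempty World
  R : World → World → Prop
  trans : Transitive R
  cwf : ∀ f : ℕ → World, ¬ ∀ i, R (f i) (f (i + 1))
  val : World → ℕ → Prop

/-- Truth of a formula at a world of a GL-model. -/
def GLModel.sat (M : GLModel) (w : M.World) (φ : Formula) : Prop := KSat M.R M.val φ w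

/-- Truth of a sequent Γ ▸ Δ at a world: some γ ∈ Γ is false or some δ ∈ Δ is true. -/
def GLModel.seqTrue (M : GLModel) (w : M.World) (Γ Δ : Finset Formula) : Prop :=
  (∃ γ ∈ Γ, ¬ M.sat w γ) ∨ (∃ δ ∈ Δ, M.sat w δ)

/-- w is Σ-reflexive: □α → α is true at w for every □α ∈ Σ. -/
def GLModel.reflexiveFor (M : GLModel) (w : M.World) (S : Finset Formula) : Prop :=
  ∀ α : Formula, Formula.box α ∈ S → M.sat w ((Formula.box α).imp α)

/-- Saturation conditions (→L), (→R) for first-level sequents. -/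
def Saturated1 (Γ Δ : Finset Formula) : Prop :=
  (∀ φ ψ : Formula, φ.imp ψ ∈ Γ → φ ∈ Δ ∨ ψ ∈ Γ) ∧
  (∀ φ ψ : Formula, φ.imp ψ ∈ Δ → φ ∈ Γ ∧ ψ ∈ Δ)

/-- Saturation for second-level sequents: additionally (□L). -/
def Saturated2 (Γ Δ : Finset Formula) : Prop :=
  Saturated1 Γ Δ ∧ ∀ φ : Formula, Formula.box φ ∈ Γ → φ ∈ Γ

def Saturated : SeqLevel → Finset Formula → Finset Formula → Prop
  | .one => Saturated1
  | .two => Saturated2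

/-- The Hilbert system GL. -/
inductive GLHilbert : Formula → Prop
  | ax1 (φ ψ : Formula) : GLHilbert (φ.imp (ψ.imp φ))
  | ax2 (φ ψ χ : Formula) :
      GLHilbert ((φ.imp (ψ.imp χ)).imp ((φ.imp ψ).imp (φ.imp χ)))
  | ax3 (φ : Formula) : GLHilbert (((φ.imp .bot).imp .bot).imp φ)
  | axK (φ ψ : Formula) :
      GLHilbert ((Formula.box (φ.imp ψ)).imp ((Formula.box φ).imp (Formula.box ψ)))
  | axLob (φ : Formula) :
      GLHilbert ((Formula.box ((Formula.box φ).imp φ)).imp (Formula.box φ))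
  | mp {φ ψ} : GLHilbert (φ.imp ψ) → GLHilbert φ → GLHilbert ψ
  | nec {φ} : GLHilbert φ → GLHilbert (Formula.box φ)

/-- The Hilbert system GLS: theorems of GL and all □α → α, closed under modus ponens. -/
inductive GLSHilbert : Formula → Prop
  | gl {φ} : GLHilbert φ → GLSHilbert φ
  | refl (α : Formula) : GLSHilbert ((Formula.box α).imp α)
  | mp {φ ψ} : GLSHilbert (φ.imp ψ) → GLSHilbert φ → GLSHilbert ψ

/-- Conjunction (encoded with → and ⊥) of a list of formulas; empty conjunction is ⊤. -/
def Formula.conj : List Formula → Formula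
  | [] => Formula.bot.imp Formula.bot
  | φ :: l => ((φ.imp ((Formula.conj l).imp .bot)).imp .bot)

/-- Membership predicate for the canonical model: saturated first-level sequents over S
that are not cut-free provable in GLS_seq. -/
def W0pred (S : Finset Formula) (s : Finset Formula × Finset Formula) : Prop :=
  Saturated1 s.1 s.2 ∧ ¬ GLSSeq false SeqLevel.one s.1 s.2 ∧ s.1 ∪ s.2 ⊆ S

/-- Worlds of the canonical model. -/
def W0 (S : Finset Formula) : Type := {s : Finset Formula × Finset Formula // W0pred S s}

/-- Accessibility of the canonical model: (Γ⇒Δ) R₀ (Γ'⇒Δ') iff Γ_□ ⊊ Γ'_□ and Γ_□ ⊆ Γ'. -/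
def R0 (S : Finset Formula) (s t : W0 S) : Prop :=
  boxInv s.1.1 ⊂ boxInv t.1.1 ∧ boxInv s.1.1 ⊆ t.1.1

/-- Valuation of the canonical model: p is true at (Γ⇒Δ) iff p ∈ Γ. -/
def V0 (S : Finset Formula) (s : W0 S) (p : ℕ) : Prop := Formula.var p ∈ s.1.1

/-- The extended set of worlds W = W₀ ∪ ℕ. -/
def Wext (S : Finset Formula) : Type := W0 S ⊕ ℕ

/-- The extended accessibility relation, with distinguished world `wp` in W₀. -/
def Rext (S : Finset Formula) (wp : W0 S) : Wext S → Wext S → Prop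
  | Sum.inl x, Sum.inl y => R0 S x y
  | Sum.inr _, Sum.inl y => y = wp ∨ R0 S wp y
  | Sum.inr n, Sum.inr m => m < n
  | Sum.inl _, Sum.inr _ => False

/-- The extended valuation: worlds in ℕ behave like the distinguished world `wp`. -/
def Vext (S : Finset Formula) (wp : W0 S) : Wext S → ℕ → Prop
  | Sum.inl x, p => V0 S x p
  | Sum.inr _, p => V0 S wp p
/-
Soundness: every rule of GLS_seq preserves validity, where a second-level sequent counts as valid
when it holds at all Σ-reflexive worlds for some finite Σ; a (□L) inference with principal formula
□φ simply adds □φ to Σ.  Along an infinitely descending chain every world sees all the earlier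
ones, so a formula □α → α fails at most once on the chain, which gives (2) ⇒ (3).
Completeness (4) ⇒ (5): an unprovable Ψ ⇛ Φ is saturated inside its subformulas to a sequent wp;
below the finite canonical model of saturated unprovable first-level sequents we hang an infinite
descending chain of copies of wp, and the truth lemma makes Ψ ⇛ Φ false along the whole chain.
-/

lemma Formula.mem_subf_self (φ : Formula) : φ ∈ φ.subf := by
  cases φ <;> simp [Formula.subf]

lemma Formula.subf_subset_of_mem {ψ χ : Formula} (h : χ ∈ ψ.subf) : χ.subf ⊆ ψ.subf := by
  induction ψ with
  | var | bot =>
    simp only [Formula.subf, Finset.mem_singleton] at h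
    exact h ▸ subset_rfl
  | imp φ₁ φ₂ ih₁ ih₂ =>
    simp only [Formula.subf, Finset.mem_insert, Finset.mem_union] at h
    rcases h with rfl | h | h
    · exact subset_rfl
    · exact (ih₁ h).trans (Finset.subset_union_left.trans (Finset.subset_insert _ _))
    · exact (ih₂ h).trans (Finset.subset_union_right.trans (Finset.subset_insert _ _))
  | box φ₁ ih =>
    simp only [Formula.subf, Finset.mem_insert] at h
    rcases h with rfl | h
    · exact subset_rfl
    · exact (ih h).trans (Finset.subset_insert _ _)

lemma mem_boxInv {Θ : Finset Formula} {φ : Formula} : φ ∈ boxInv Θ ↔ Formula.box φ ∈ Θ := by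
  constructor
  · simp only [boxInv, Finset.mem_image, Finset.mem_filter]
    rintro ⟨ψ, ⟨hψ, hb⟩, rfl⟩
    cases ψ <;> simp_all [Formula.isBox, Formula.unbox]
  · exact fun h => Finset.mem_image.2 ⟨_, Finset.mem_filter.2 ⟨h, rfl⟩, rfl⟩

lemma image_box_boxInv_subset (Θ : Finset Formula) : (boxInv Θ).image Formula.box ⊆ Θ := by
  simp only [Finset.subset_iff, Finset.mem_image]
  rintro _ ⟨α, hα, rfl⟩
  exact mem_boxInv.1 hα

def SubformulaClosed (S : Finset Formula) : Prop := ∀ ψ ∈ S, ψ.subf ⊆ S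

namespace SubformulaClosed

variable {S : Finset Formula}

lemma imp_left_mem {φ ψ : Formula} (hS : SubformulaClosed S) (h : φ.imp ψ ∈ S) : φ ∈ S :=
  hS _ h (by simp [Formula.subf, Formula.mem_subf_self])

lemma imp_right_mem {φ ψ : Formula} (hS : SubformulaClosed S) (h : φ.imp ψ ∈ S) : ψ ∈ S :=
  hS _ h (by simp [Formula.subf, Formula.mem_subf_self])

lemma box_mem {φ : Formula} (hS : SubformulaClosed S) (h : Formula.box φ ∈ S) : φ ∈ S :=
  hS _ h (by simp [Formula.subf, Formula.mem_subf_self])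

lemma boxInv_subset {Γ : Finset Formula} (hS : SubformulaClosed S) (hΓ : Γ ⊆ S) : boxInv Γ ⊆ S :=
  fun _ hα => hS.box_mem (hΓ (mem_boxInv.1 hα))

end SubformulaClosed

lemma subformulaClosed_SF (Ψ Φ : Finset Formula) : SubformulaClosed (SF Ψ Φ) := by
  intro φ hφ χ hχ
  obtain ⟨ψ, hψ, hφψ⟩ := Finset.mem_biUnion.1 hφ
  exact Finset.mem_biUnion.2 ⟨ψ, hψ, Formula.subf_subset_of_mem hφψ hχ⟩

lemma subset_SF (Ψ Φ : Finset Formula) : Ψ ∪ Φ ⊆ SF Ψ Φ :=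
  fun φ hφ => Finset.mem_biUnion.2 ⟨φ, hφ, φ.mem_subf_self⟩

lemma GLSSeq.withCut {c : Bool} {lv : SeqLevel} {Γ Δ : Finset Formula} (h : GLSSeq c lv Γ Δ) :
    GLSSeq true lv Γ Δ := by
  induction h with
  | init => exact .init _ _ _
  | initBot => exact .initBot _ _
  | cut φ _ _ ih₁ ih₂ => exact .cut φ ih₁ ih₂
  | weak h₁ h₂ _ ih => exact .weak h₁ h₂ ih
  | impL _ _ ih₁ ih₂ => exact .impL ih₁ ih₂
  | impR _ ih => exact .impR ih
  | boxGL _ ih => exact .boxGL ih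
  | boxL φ _ ih => exact .boxL φ ih
  | lift _ ih => exact .lift ih

lemma GLSSeq.of_mem_of_mem {c : Bool} {lv : SeqLevel} {Γ Δ : Finset Formula} {φ : Formula}
    (hΓ : φ ∈ Γ) (hΔ : φ ∈ Δ) : GLSSeq c lv Γ Δ :=
  .weak (Finset.singleton_subset_iff.2 hΓ) (Finset.singleton_subset_iff.2 hΔ) (.init c lv φ)

lemma GLSSeq.of_bot_mem {c : Bool} {lv : SeqLevel} {Γ Δ : Finset Formula}
    (h : Formula.bot ∈ Γ) : GLSSeq c lv Γ Δ :=
  .weak (Finset.singleton_subset_iff.2 h) (Finset.empty_subset _) (.initBot c lv)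

namespace GLModel

variable (M : GLModel) {w : M.World} {Γ Δ : Finset Formula} {φ ψ : Formula}

lemma seqTrue_iff : M.seqTrue w Γ Δ ↔ ((∀ γ ∈ Γ, M.sat w γ) → ∃ δ ∈ Δ, M.sat w δ) := by
  simp only [seqTrue, or_iff_not_imp_left, not_exists, not_and, not_not]

lemma sat_imp : M.sat w (φ.imp ψ) ↔ (M.sat w φ → M.sat w ψ) := Iff.rfl

lemma sat_box : M.sat w (Formula.box φ) ↔ ∀ w', M.R w w' → M.sat w' φ := Iff.rfl

lemma wellFounded_flip : WellFounded (flip M.R) :=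
  wellFounded_iff_isEmpty_descending_chain.2 ⟨fun ⟨f, hf⟩ => M.cwf f hf⟩

lemma rel_of_lt {f : ℕ → M.World} (hf : ∀ i, M.R (f (i + 1)) (f i)) {i j : ℕ} (hij : i < j) :
    M.R (f j) (f i) :=
  haveI : IsTrans M.World (flip M.R) := ⟨fun _ _ _ h₁ h₂ => M.trans h₂ h₁⟩
  Nat.rel_of_forall_rel_succ_of_lt (flip M.R) hf hij

lemma reflexiveFor_mono {S S' : Finset Formula} (h : S ⊆ S') (hw : M.reflexiveFor w S') :
    M.reflexiveFor w S :=
  fun α hα => hw α (h hα)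

lemma reflexiveFor_insert_box {S : Finset Formula} :
    M.reflexiveFor w (insert (Formula.box φ) S) ↔
      M.sat w ((Formula.box φ).imp φ) ∧ M.reflexiveFor w S := by
  simp only [reflexiveFor, Finset.mem_insert, Formula.box.injEq]
  exact ⟨fun h => ⟨h φ (Or.inl rfl), fun α hα => h α (Or.inr hα)⟩,
    fun ⟨h₁, h₂⟩ α => Or.rec (fun h => h ▸ h₁) (h₂ α)⟩

lemma subsingleton_not_reflexive_along {f : ℕ → M.World} (hf : ∀ i, M.R (f (i + 1)) (f i))
    (α : Formula) : {j | ¬ M.sat (f j) ((Formula.box α).imp α)}.Subsingleton := by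
  have key : ∀ i j, i < j → ¬ M.sat (f j) ((Formula.box α).imp α) →
      M.sat (f i) ((Formula.box α).imp α) :=
    fun i j hij hj _ => (Classical.not_imp.1 hj).1 (f i) (M.rel_of_lt hf hij)
  intro i hi j hj
  by_contra hne
  rcases Nat.lt_or_gt_of_ne hne with h | h
  exacts [hi (key i j h hj), hj (key j i h hi)]

lemma eventually_reflexiveFor {f : ℕ → M.World} (hf : ∀ i, M.R (f (i + 1)) (f i))
    (S : Finset Formula) : ∀ᶠ j in Filter.atTop, M.reflexiveFor (f j) S := by
  have h : ∀ α ∈ boxInv S, ∀ᶠ j in Filter.atTop, M.sat (f j) ((Formula.box α).imp α) := by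
    intro α _
    rw [← Nat.cofinite_eq_atTop]
    simpa using (M.subsingleton_not_reflexive_along hf α).finite.eventually_cofinite_notMem
  filter_upwards [(Filter.eventually_all_finset _).2 h] with j hj α hα
    using hj α (mem_boxInv.2 hα)

end GLModel

section SemanticRules

variable {M : GLModel} {w : M.World} {Γ Δ Γ' Δ' : Finset Formula} {φ ψ : Formula}

lemma seqTrue_init (M : GLModel) (w : M.World) (φ : Formula) : M.seqTrue w {φ} {φ} := by
  simp [GLModel.seqTrue_iff]

lemma seqTrue_initBot (M : GLModel) (w : M.World) : M.seqTrue w {Formula.bot} ∅ := by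
  simp [GLModel.seqTrue_iff, GLModel.sat, KSat]

lemma seqTrue_weak (hΓ : Γ ⊆ Γ') (hΔ : Δ ⊆ Δ') (h : M.seqTrue w Γ Δ) : M.seqTrue w Γ' Δ' := by
  rw [GLModel.seqTrue_iff] at *
  exact fun hΓ' => (h fun γ hγ => hΓ' γ (hΓ hγ)).imp fun δ ⟨hδ, hs⟩ => ⟨hΔ hδ, hs⟩

lemma seqTrue_cut (h₁ : M.seqTrue w Γ (insert φ Δ)) (h₂ : M.seqTrue w (insert φ Γ) Δ) :
    M.seqTrue w Γ Δ := by
  simp only [GLModel.seqTrue_iff, Finset.forall_mem_insert, Finset.exists_mem_insert] at *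
  tauto

lemma seqTrue_impL (h₁ : M.seqTrue w Γ (insert φ Δ)) (h₂ : M.seqTrue w (insert ψ Γ) Δ) :
    M.seqTrue w (insert (φ.imp ψ) Γ) Δ := by
  simp only [GLModel.seqTrue_iff, Finset.forall_mem_insert, Finset.exists_mem_insert,
    GLModel.sat_imp] at *
  tauto

lemma seqTrue_impR (h : M.seqTrue w (insert φ Γ) (insert ψ Δ)) :
    M.seqTrue w Γ (insert (φ.imp ψ) Δ) := by
  simp only [GLModel.seqTrue_iff, Finset.forall_mem_insert, Finset.exists_mem_insert,
    GLModel.sat_imp] at *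
  tauto

lemma seqTrue_boxL (hrefl : M.sat w ((Formula.box φ).imp φ)) (h : M.seqTrue w (insert φ Γ) Δ) :
    M.seqTrue w (insert (Formula.box φ) Γ) Δ := by
  simp only [GLModel.seqTrue_iff, Finset.forall_mem_insert, GLModel.sat_imp] at *
  tauto

/-- Löb's rule is sound because converse well-foundedness provides an `R`-last world refuting `φ`,
at which `□φ` holds. -/
lemma seqTrue_boxGL (h : ∀ (M : GLModel) (w : M.World),
      M.seqTrue w (Γ ∪ Γ.image Formula.box ∪ {Formula.box φ}) {φ}) :
    M.seqTrue w (Γ.image Formula.box) {Formula.box φ} := by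
  simp only [GLModel.seqTrue_iff, Finset.forall_mem_image, Finset.mem_singleton,
    exists_eq_left] at h ⊢
  intro hΓ
  by_contra hφ
  obtain ⟨w₀, hww₀, hw₀⟩ : ∃ w₀, M.R w w₀ ∧ ¬ M.sat w₀ φ := by
    simpa [GLModel.sat_box] using hφ
  obtain ⟨u, ⟨hwu, hu⟩, hlast⟩ :=
    M.wellFounded_flip.has_min {v | M.R w v ∧ ¬ M.sat v φ} ⟨w₀, hww₀, hw₀⟩
  refine hu (h M u fun γ hγ => ?_)
  simp only [Finset.mem_union, Finset.mem_image, Finset.mem_singleton] at hγ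
  rcases hγ with (hγ | ⟨γ, hγ, rfl⟩) | rfl
  · exact hΓ hγ u hwu
  · exact fun v huv => hΓ hγ v (M.trans hwu huv)
  · exact fun v huv => by_contra fun hv => hlast v ⟨M.trans hwu huv, hv⟩ huv

end SemanticRules

def GLSValid : SeqLevel → Finset Formula → Finset Formula → Prop
  | .one, Γ, Δ => ∀ (M : GLModel) (w : M.World), M.seqTrue w Γ Δ
  | .two, Γ, Δ => ∃ S : Finset Formula, ∀ (M : GLModel) (w : M.World),
      M.reflexiveFor w S → M.seqTrue w Γ Δ

namespace GLSValid

variable {lv : SeqLevel} {Γ Δ Γ₁ Δ₁ Γ₂ Δ₂ : Finset Formula}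

lemma of_forall (lv : SeqLevel) (h : ∀ (M : GLModel) (w : M.World), M.seqTrue w Γ Δ) :
    GLSValid lv Γ Δ := by
  cases lv
  · exact h
  · exact ⟨∅, fun M w _ => h M w⟩

lemma of_pointwise
    (h : ∀ (M : GLModel) (w : M.World), M.seqTrue w Γ₁ Δ₁ → M.seqTrue w Γ Δ)
    (h₁ : GLSValid lv Γ₁ Δ₁) : GLSValid lv Γ Δ := by
  cases lv
  · exact fun M w => h M w (h₁ M w)
  · obtain ⟨S, hS⟩ := h₁
    exact ⟨S, fun M w hw => h M w (hS M w hw)⟩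

lemma of_pointwise₂
    (h : ∀ (M : GLModel) (w : M.World), M.seqTrue w Γ₁ Δ₁ → M.seqTrue w Γ₂ Δ₂ → M.seqTrue w Γ Δ)
    (h₁ : GLSValid lv Γ₁ Δ₁) (h₂ : GLSValid lv Γ₂ Δ₂) : GLSValid lv Γ Δ := by
  cases lv
  · exact fun M w => h M w (h₁ M w) (h₂ M w)
  · obtain ⟨S₁, hS₁⟩ := h₁
    obtain ⟨S₂, hS₂⟩ := h₂
    exact ⟨S₁ ∪ S₂, fun M w hw => h M w (hS₁ M w (M.reflexiveFor_mono Finset.subset_union_left hw))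
      (hS₂ M w (M.reflexiveFor_mono Finset.subset_union_right hw))⟩

end GLSValid

theorem GLSSeq.valid {c : Bool} {lv : SeqLevel} {Γ Δ : Finset Formula} (h : GLSSeq c lv Γ Δ) :
    GLSValid lv Γ Δ := by
  induction h with
  | init _ lv φ => exact .of_forall lv fun M w => seqTrue_init M w φ
  | initBot _ lv => exact .of_forall lv seqTrue_initBot
  | cut _ _ _ ih₁ ih₂ => exact .of_pointwise₂ (fun _ _ => seqTrue_cut) ih₁ ih₂
  | weak hΓ hΔ _ ih => exact .of_pointwise (fun _ _ => seqTrue_weak hΓ hΔ) ih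
  | impL _ _ ih₁ ih₂ => exact .of_pointwise₂ (fun _ _ => seqTrue_impL) ih₁ ih₂
  | impR _ ih => exact .of_pointwise (fun _ _ => seqTrue_impR) ih
  | boxGL _ ih => exact fun M w => seqTrue_boxGL ih
  | boxL φ _ ih =>
    obtain ⟨S, hS⟩ := ih
    refine ⟨insert (Formula.box φ) S, fun M w hw => ?_⟩
    rw [GLModel.reflexiveFor_insert_box] at hw
    exact seqTrue_boxL hw.1 (hS M w hw.2)
  | lift _ ih => exact .of_forall .two ih

def UnprovableWithin (lv : SeqLevel) (S : Finset Formula) : Set (Finset Formula × Finset Formula) :=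
  {p | p.1 ∪ p.2 ⊆ S ∧ ¬ GLSSeq false lv p.1 p.2}

lemma finite_unprovableWithin (lv : SeqLevel) (S : Finset Formula) :
    (UnprovableWithin lv S).Finite :=
  (S.powerset ×ˢ S.powerset).finite_toSet.subset fun p hp => by
    simpa [Finset.union_subset_iff] using hp.1

/-- A maximal unprovable sequent is saturated: each saturation clause names an extension that
one of the rules would turn into a proof, so the extension is unprovable, hence not larger. -/
lemma saturated_of_maximal {lv : SeqLevel} {S : Finset Formula} (hS : SubformulaClosed S)
    {Γ Δ : Finset Formula} (hmax : Maximal (· ∈ UnprovableWithin lv S) (Γ, Δ)) :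
    Saturated lv Γ Δ := by
  have hsub : Γ ⊆ S ∧ Δ ⊆ S := Finset.union_subset_iff.1 hmax.1.1
  have hnp : ¬ GLSSeq false lv Γ Δ := hmax.1.2
  have grow {Γ' Δ'} (hΓ : Γ ⊆ Γ') (hΔ : Δ ⊆ Δ') (hΓS : Γ' ⊆ S) (hΔS : Δ' ⊆ S)
      (hnp' : ¬ GLSSeq false lv Γ' Δ') : Γ' ⊆ Γ ∧ Δ' ⊆ Δ :=
    Prod.mk_le_mk.1 (hmax.2 (y := (Γ', Δ')) ⟨Finset.union_subset hΓS hΔS, hnp'⟩ ⟨hΓ, hΔ⟩)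
  have mem_left {φ} (hφ : φ ∈ S) (h : ¬ GLSSeq false lv (insert φ Γ) Δ) : φ ∈ Γ :=
    (Finset.insert_subset_iff.1 (grow (Finset.subset_insert _ _) subset_rfl
      (Finset.insert_subset hφ hsub.1) hsub.2 h).1).1
  have mem_right {φ} (hφ : φ ∈ S) (h : ¬ GLSSeq false lv Γ (insert φ Δ)) : φ ∈ Δ :=
    (Finset.insert_subset_iff.1 (grow subset_rfl (Finset.subset_insert _ _)
      hsub.1 (Finset.insert_subset hφ hsub.2) h).2).1
  have saturated1 : Saturated1 Γ Δ := by
    refine ⟨fun φ ψ h => ?_, fun φ ψ h => ?_⟩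
    · by_cases hφ : GLSSeq false lv Γ (insert φ Δ)
      · exact .inr <| mem_left (hS.imp_right_mem (hsub.1 h)) fun hψ =>
          hnp (Finset.insert_eq_of_mem h ▸ .impL hφ hψ)
      · exact .inl (mem_right (hS.imp_left_mem (hsub.1 h)) hφ)
    · have hφψ : ¬ GLSSeq false lv (insert φ Γ) (insert ψ Δ) := fun hp =>
        hnp (Finset.insert_eq_of_mem h ▸ .impR hp)
      exact ⟨mem_left (hS.imp_left_mem (hsub.2 h)) fun hp =>
          hφψ (.weak subset_rfl (Finset.subset_insert _ _) hp),
        mem_right (hS.imp_right_mem (hsub.2 h)) fun hp =>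
          hφψ (.weak (Finset.subset_insert _ _) subset_rfl hp)⟩
  cases lv
  · exact saturated1
  · exact ⟨saturated1, fun φ h => mem_left (hS.box_mem (hsub.1 h)) fun hp =>
      hnp (Finset.insert_eq_of_mem h ▸ .boxL φ hp)⟩

lemma exists_saturated_extension {lv : SeqLevel} {S : Finset Formula} (hS : SubformulaClosed S)
    {Γ Δ : Finset Formula} (hsub : Γ ∪ Δ ⊆ S) (hnp : ¬ GLSSeq false lv Γ Δ) :
    ∃ Γ' Δ', Γ ⊆ Γ' ∧ Δ ⊆ Δ' ∧ Γ' ∪ Δ' ⊆ S ∧ ¬ GLSSeq false lv Γ' Δ' ∧ Saturated lv Γ' Δ' := by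
  obtain ⟨⟨Γ', Δ'⟩, ⟨hΓ, hΔ⟩, hmax⟩ :=
    (finite_unprovableWithin lv S).exists_le_maximal (a := (Γ, Δ)) ⟨hsub, hnp⟩
  exact ⟨Γ', Δ', hΓ, hΔ, hmax.1.1, hmax.1.2, saturated_of_maximal hS hmax⟩

namespace W0

variable {S : Finset Formula}

lemma not_mem_both (s : W0 S) {φ : Formula} (h₁ : φ ∈ s.1.1) (h₂ : φ ∈ s.1.2) : False :=
  s.2.2.1 (.of_mem_of_mem h₁ h₂)

lemma bot_not_mem (s : W0 S) : Formula.bot ∉ s.1.1 :=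
  fun h => s.2.2.1 (.of_bot_mem h)

lemma card_boxInv_le (s : W0 S) : (boxInv s.1.1).card ≤ (boxInv S).card :=
  Finset.card_le_card fun _ hα =>
    mem_boxInv.2 (s.2.2.2 (Finset.mem_union_left _ (mem_boxInv.1 hα)))

/-- Saturating the premise of the (□GL) inference with conclusion `□(Γ_□) ⇒ □φ` yields the
successor refuting `φ`. -/
lemma exists_R0_of_box_mem_right (hS : SubformulaClosed S) (s : W0 S) {φ : Formula} :
    Formula.box φ ∈ s.1.2 → ∃ t : W0 S, R0 S s t ∧ φ ∈ t.1.2 := by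
  obtain ⟨⟨Γ, Δ⟩, -, hnp, hsub⟩ := s
  intro (hφ : Formula.box φ ∈ Δ)
  have hsub : Γ ⊆ S ∧ Δ ⊆ S := Finset.union_subset_iff.1 hsub
  set Γ₀ := boxInv Γ ∪ (boxInv Γ).image Formula.box ∪ {Formula.box φ}
  have hnp₀ : ¬ GLSSeq false .one Γ₀ {φ} := fun hp =>
    hnp (.weak (image_box_boxInv_subset Γ) (Finset.singleton_subset_iff.2 hφ) (.boxGL hp))
  have hsub₀ : Γ₀ ∪ {φ} ⊆ S := by
    simp only [Γ₀, Finset.union_subset_iff, Finset.singleton_subset_iff]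
    exact ⟨⟨⟨hS.boxInv_subset hsub.1, (image_box_boxInv_subset Γ).trans hsub.1⟩, hsub.2 hφ⟩,
      hS.box_mem (hsub.2 hφ)⟩
  obtain ⟨Γ', Δ', hΓ', hΔ', hsub', hnp', hsat'⟩ := exists_saturated_extension hS hsub₀ hnp₀
  have hboxInv : boxInv Γ ⊆ boxInv Γ' := fun α hα =>
    mem_boxInv.2 (hΓ' (by simp [Γ₀, hα]))
  have hφΓ' : φ ∈ boxInv Γ' := mem_boxInv.2 (hΓ' (by simp [Γ₀]))
  have hφΓ : φ ∉ boxInv Γ := fun h => hnp (.of_mem_of_mem (mem_boxInv.1 h) hφ)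
  refine ⟨⟨(Γ', Δ'), hsat', hnp', hsub'⟩, ⟨?_, fun α hα => hΓ' (by simp [Γ₀, hα])⟩,
    hΔ' (Finset.mem_singleton_self φ)⟩
  exact Finset.ssubset_iff_subset_ne.2 ⟨hboxInv, fun h => hφΓ (h ▸ hφΓ')⟩

end W0

lemma not_forall_rel_succ_of_rank {α : Type*} {r : α → α → Prop} (rank : α → ℕ)
    (hrank : ∀ a b, r a b → rank b < rank a) (f : ℕ → α) : ¬ ∀ i, r (f i) (f (i + 1)) :=
  fun hf =>
    let ⟨n, hn⟩ := WellFounded.not_rel_apply_succ (r := (· < ·)) (rank ∘ f)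
    hn (hrank _ _ (hf n))

namespace Wext

variable {S : Finset Formula} (wp : W0 S)

def rank : Wext S → ℕ
  | .inl x => (boxInv S).card - (boxInv x.1.1).card
  | .inr n => (boxInv S).card + 1 + n

lemma rank_lt_of_Rext {a b : Wext S} (h : Rext S wp a b) : rank b < rank a := by
  rcases a with x | n <;> rcases b with y | m <;> simp only [Rext] at h <;> simp only [rank]
  · have := Finset.card_lt_card h.1
    have := W0.card_boxInv_le y
    omega
  · have := W0.card_boxInv_le y
    omega
  · omega

lemma Rext_trans {a b c : Wext S} (hab : Rext S wp a b) (hbc : Rext S wp b c) : Rext S wp a c := by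
  have R0_trans {x y z : W0 S} (hxy : R0 S x y) (hyz : R0 S y z) : R0 S x z :=
    ⟨hxy.1.trans hyz.1, hxy.1.subset.trans hyz.2⟩
  rcases a with x | n <;> rcases b with y | m <;> rcases c with z | k <;>
    simp only [Rext] at hab hbc ⊢
  · exact R0_trans hab hbc
  · rcases hab with rfl | hab
    exacts [.inr hbc, .inr (R0_trans hab hbc)]
  · exact hbc
  · exact hbc.trans hab

def model : GLModel where
  World := Wext S
  ne := ⟨.inr 0⟩
  R := Rext S wp
  trans _ _ _ := Rext_trans wp
  cwf := not_forall_rel_succ_of_rank rank fun _ _ => rank_lt_of_Rext wp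
  val := Vext S wp

def label : Wext S → W0 S
  | .inl x => x
  | .inr _ => wp

variable {wp}

lemma Vext_iff {a : Wext S} {p : ℕ} : Vext S wp a p ↔ Formula.var p ∈ (label wp a).1.1 := by
  cases a <;> rfl

lemma boxInv_label_subset (hwp : ∀ φ, Formula.box φ ∈ wp.1.1 → φ ∈ wp.1.1) {a b : Wext S}
    (h : Rext S wp a b) : boxInv (label wp a).1.1 ⊆ (label wp b).1.1 := by
  have hwp' : boxInv wp.1.1 ⊆ wp.1.1 := fun α hα => hwp α (mem_boxInv.1 hα)
  rcases a with x | n <;> rcases b with y | m <;> simp only [Rext] at h <;> simp only [label]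
  · exact h.2
  · rcases h with rfl | h
    exacts [hwp', h.2]
  · exact hwp'

lemma exists_Rext_of_box_mem_right (hS : SubformulaClosed S) {a : Wext S} {φ : Formula}
    (h : Formula.box φ ∈ (label wp a).1.2) : ∃ b, Rext S wp a b ∧ φ ∈ (label wp b).1.2 := by
  rcases a with x | n
  · obtain ⟨t, hxt, ht⟩ := W0.exists_R0_of_box_mem_right hS x h
    exact ⟨.inl t, hxt, ht⟩
  · obtain ⟨t, hwpt, ht⟩ := W0.exists_R0_of_box_mem_right hS wp h
    exact ⟨.inl t, .inr hwpt, ht⟩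

lemma truth_lemma (hS : SubformulaClosed S) (hwp : ∀ φ, Formula.box φ ∈ wp.1.1 → φ ∈ wp.1.1)
    (φ : Formula) (a : Wext S) :
    (φ ∈ (label wp a).1.1 → (model wp).sat a φ) ∧
      (φ ∈ (label wp a).1.2 → ¬ (model wp).sat a φ) := by
  induction φ generalizing a with
  | var p =>
    exact ⟨Vext_iff.2, fun h hs => (label wp a).not_mem_both (Vext_iff.1 hs) h⟩
  | bot => exact ⟨fun h => absurd h (label wp a).bot_not_mem, fun _ hs => hs⟩
  | imp φ ψ ihφ ihψ =>
    have hsat := (label wp a).2.1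
    refine ⟨fun h hφ => ?_, fun h hs => ?_⟩
    · rcases hsat.1 φ ψ h with hφ' | hψ
      exacts [absurd hφ ((ihφ a).2 hφ'), (ihψ a).1 hψ]
    · exact (ihψ a).2 (hsat.2 φ ψ h).2 (hs ((ihφ a).1 (hsat.2 φ ψ h).1))
  | box φ ih =>
    refine ⟨fun h b hab => (ih b).1 (boxInv_label_subset hwp hab (mem_boxInv.2 h)),
      fun h hs => ?_⟩
    obtain ⟨b, hab, hb⟩ := exists_Rext_of_box_mem_right hS h
    exact (ih b).2 hb (hs b hab)

end Wext

theorem GLSSeq.cutFree_of_forall_chain_exists_seqTrue {Ψ Φ : Finset Formula}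
    (h : ∀ (M : GLModel) (f : ℕ → M.World), (∀ i, M.R (f (i + 1)) (f i)) →
      ∃ i, M.seqTrue (f i) Ψ Φ) :
    GLSSeq false .two Ψ Φ := by
  by_contra hnp
  have hS := subformulaClosed_SF Ψ Φ
  obtain ⟨Γ, Δ, hΨ, hΦ, hsub, hnp', hsat⟩ := exists_saturated_extension hS (subset_SF Ψ Φ) hnp
  let wp : W0 (SF Ψ Φ) := ⟨(Γ, Δ), hsat.1, fun hp => hnp' hp.lift, hsub⟩
  obtain ⟨i, hi⟩ := h (Wext.model wp) Sum.inr fun i => Nat.lt_succ_self i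
  have truth := Wext.truth_lemma (wp := wp) hS hsat.2
  obtain ⟨δ, hδ, hsδ⟩ := (GLModel.seqTrue_iff _).1 hi fun γ hγ => (truth γ (.inr i)).1 (hΨ hγ)
  exact (truth δ (.inr i)).2 (hΦ hδ) hsδ

/-- Theorem (main theorem): for a second-level sequent Ψ ⇛ Φ, the six conditions
C1, C2, C3, C4, cut-free provability, and provability in GLS_seq are equivalent. -/
theorem gls_main_tfae (Ψ Φ : Finset Formula) :
    List.TFAE
      [ ∃ S : Finset Formula, ∀ (M : GLModel) (w : M.World),
          M.reflexiveFor w S → M.seqTrue w Ψ Φ,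
        ∀ M : GLModel, ∃ S : Finset Formula, ∀ w : M.World,
          M.reflexiveFor w S → M.seqTrue w Ψ Φ,
        ∀ (M : GLModel) (f : ℕ → M.World), (∀ i, M.R (f (i + 1)) (f i)) →
          ∃ i, ∀ j, i ≤ j → M.seqTrue (f j) Ψ Φ,
        ∀ (M : GLModel) (f : ℕ → M.World), (∀ i, M.R (f (i + 1)) (f i)) →
          ∃ i, M.seqTrue (f i) Ψ Φ,
        GLSSeq false SeqLevel.two Ψ Φ,
        GLSSeq true SeqLevel.two Ψ Φ ] := by
  tfae_have 1 → 2 := fun ⟨S, hS⟩ M => ⟨S, hS M⟩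
  tfae_have 2 → 3 := fun h M f hf =>
    let ⟨S, hS⟩ := h M
    Filter.eventually_atTop.1 ((M.eventually_reflexiveFor hf S).mono fun j => hS (f j))
  tfae_have 3 → 4 := fun h M f hf => (h M f hf).imp fun i hi => hi i le_rfl
  tfae_have 4 → 5 := GLSSeq.cutFree_of_forall_chain_exists_seqTrue
  tfae_have 5 → 6 := GLSSeq.withCut
  tfae_have 6 → 1 := GLSSeq.valid
  tfae_finish
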